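/- Let G be a connected graph and n ≥ 1. A set S ⊆ V(G ∘ K_n) is a maximal general position set of G ∘ K_n if and only if S = S_G × V(K_n) for some maximal general position set S_G of G. -/

import Mathlib

open SimpleGraph

/-- The interval `I[u,v]`: vertices lying on some `u,v`-geodesic. -/
def gpInterval {V : Type*} (G : SimpleGraph V) (u v : V) : Set V :=
  {x | G.dist u x + G.dist x v = G.dist u v}

/-- `S` is a general position set: no three distinct vertices of `S` lie on a common geodesic. -/
def IsGPSet {V : Type*} (G : SimpleGraph V) (S : Set V) : Prop :=
  ∀ u ∈ S, ∀ v ∈ S, ∀ w ∈ S, u ≠ v → u ≠ w → v ≠ w → w ∉ gpInterval G u v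

/-- The lexicographic product `G ∘ H`. -/
def lexProd {V W : Type*} (G : SimpleGraph V) (H : SimpleGraph W) : SimpleGraph (V × W) where
  Adj x y := G.Adj x.1 y.1 ∨ (x.1 = y.1 ∧ H.Adj x.2 y.2)
  symm := by
    constructor
    rintro ⟨a, b⟩ ⟨c, d⟩ (h | ⟨rfl, h⟩)
    · exact Or.inl h.symm
    · exact Or.inr ⟨rfl, h.symm⟩
  loopless := by
    constructor
    rintro ⟨a, b⟩ (h | ⟨-, h⟩)
    · exact G.irrefl h
    · exact H.irrefl h

namespace GPAux

variable {V : Type*} {n : ℕ} {G : SimpleGraph V}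

/-- Lift a walk in `G` to the lexicographic product, with constant second coordinate. -/
def liftWalk (j : Fin n) : ∀ {a b : V}, G.Walk a b →
    (lexProd G (⊤ : SimpleGraph (Fin n))).Walk (a, j) (b, j)
  | _, _, Walk.nil => Walk.nil
  | _, _, Walk.cons h p => Walk.cons (Or.inl h) (liftWalk j p)

lemma liftWalk_length (j : Fin n) : ∀ {a b : V} (p : G.Walk a b),
    (liftWalk j p).length = p.length
  | _, _, Walk.nil => rfl
  | _, _, Walk.cons h p => by
      simp only [liftWalk, Walk.length_cons, liftWalk_length j p]
      exact congrArg (· + 1) (liftWalk_length j p)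

lemma lex_reachable (hG : G.Connected) (x y : V × Fin n) :
    (lexProd G (⊤ : SimpleGraph (Fin n))).Reachable x y := by
  obtain ⟨a, i⟩ := x; obtain ⟨b, j⟩ := y
  have h2 : (lexProd G (⊤ : SimpleGraph (Fin n))).Reachable (a, j) (b, j) := by
    obtain ⟨p⟩ := hG a b
    exact ⟨liftWalk j p⟩
  by_cases h : i = j
  · subst h; exact h2
  · exact (SimpleGraph.Adj.reachable
      (Or.inr ⟨rfl, by simpa using h⟩ :
        (lexProd G (⊤ : SimpleGraph (Fin n))).Adj (a, i) (a, j))).trans h2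

lemma lex_dist_lower (hG : G.Connected) {x y : V × Fin n}
    (p : (lexProd G (⊤ : SimpleGraph (Fin n))).Walk x y) :
    G.dist x.1 y.1 ≤ p.length := by
  induction p with
  | nil => simp [SimpleGraph.dist_self]
  | @cons x b y h q ih =>
    rw [Walk.length_cons]
    rcases h with h | ⟨he, -⟩
    · have h1 : G.dist x.1 b.1 = 1 := dist_eq_one_iff_adj.mpr h
      have h2 : G.dist x.1 y.1 ≤ G.dist x.1 b.1 + G.dist b.1 y.1 := hG.dist_triangle
      omega
    · rw [he]; exact le_trans ih (Nat.le_succ _)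

lemma lex_dist_le (hG : G.Connected) {a b : V} (h : a ≠ b) (i j : Fin n) :
    (lexProd G (⊤ : SimpleGraph (Fin n))).dist (a, i) (b, j) ≤ G.dist a b := by
  obtain ⟨p, hp⟩ := hG.exists_walk_length_eq_dist a b
  cases p with
  | nil => exact absurd rfl h
  | @cons _ c _ hadj q =>
    calc (lexProd G (⊤ : SimpleGraph (Fin n))).dist (a, i) (b, j)
        ≤ (Walk.cons (Or.inl hadj) (liftWalk j q)).length := dist_le _
      _ = G.dist a b := by
          rw [← hp]
          simp [Walk.length_cons, liftWalk_length]
          exact congrArg (· + 1) (liftWalk_length j q)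

lemma lex_dist_eq (hG : G.Connected) {a b : V} (h : a ≠ b) (i j : Fin n) :
    (lexProd G (⊤ : SimpleGraph (Fin n))).dist (a, i) (b, j) = G.dist a b := by
  refine le_antisymm (lex_dist_le hG h i j) ?_
  obtain ⟨p, hp⟩ := (lex_reachable hG (a, i) (b, j)).exists_walk_length_eq_dist
  calc G.dist a b ≤ p.length := lex_dist_lower hG p
    _ = _ := hp

lemma lex_dist_col {a : V} {i j : Fin n} (h : i ≠ j) :
    (lexProd G (⊤ : SimpleGraph (Fin n))).dist (a, i) (a, j) = 1 :=
  dist_eq_one_iff_adj.mpr (Or.inr ⟨rfl, by simpa using h⟩)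

/-- Key equivalence: `S` is gp in the lex product iff its projection is gp in `G`. -/
lemma gp_iff (hG : G.Connected) (S : Set (V × Fin n)) :
    IsGPSet (lexProd G (⊤ : SimpleGraph (Fin n))) S ↔ IsGPSet G (Prod.fst '' S) := by
  constructor
  · intro hS g hg g' hg' g'' hg'' hne1 hne2 hne3 hmem
    obtain ⟨x, hx, rfl⟩ := hg
    obtain ⟨y, hy, rfl⟩ := hg'
    obtain ⟨z, hz, rfl⟩ := hg''
    refine hS x hx y hy z hz (fun e => hne1 (by rw [e])) (fun e => hne2 (by rw [e]))
      (fun e => hne3 (by rw [e])) ?_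
    show (lexProd G (⊤ : SimpleGraph (Fin n))).dist x z
        + (lexProd G (⊤ : SimpleGraph (Fin n))).dist z y
        = (lexProd G (⊤ : SimpleGraph (Fin n))).dist x y
    rw [show x = (x.1, x.2) from rfl, show y = (y.1, y.2) from rfl,
      show z = (z.1, z.2) from rfl,
      lex_dist_eq hG hne2 x.2 z.2, lex_dist_eq hG (Ne.symm hne3) z.2 y.2,
      lex_dist_eq hG hne1 x.2 y.2]
    exact hmem
  · intro hP u hu v hv w hw huv huw hvw hmem
    have hmem' : (lexProd G (⊤ : SimpleGraph (Fin n))).dist u w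
        + (lexProd G (⊤ : SimpleGraph (Fin n))).dist w v
        = (lexProd G (⊤ : SimpleGraph (Fin n))).dist u v := hmem
    by_cases h1 : w.1 = u.1
    · -- w shares column with u
      have hwu2 : u.2 ≠ w.2 := fun e => huw (Prod.ext h1.symm e)
      have d1 : (lexProd G (⊤ : SimpleGraph (Fin n))).dist u w = 1 := by
        rw [show u = (u.1, u.2) from rfl, show w = (w.1, w.2) from rfl, h1]
        exact lex_dist_col hwu2
      by_cases h2 : v.1 = u.1
      · have hwv2 : w.2 ≠ v.2 := fun e => hvw (Prod.ext (h2.trans h1.symm) e.symm)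
        have d2 : (lexProd G (⊤ : SimpleGraph (Fin n))).dist w v = 1 := by
          rw [show v = (v.1, v.2) from rfl, show w = (w.1, w.2) from rfl, h1, h2]
          exact lex_dist_col hwv2
        have huv2 : u.2 ≠ v.2 := fun e => huv (Prod.ext h2.symm e)
        have d3 : (lexProd G (⊤ : SimpleGraph (Fin n))).dist u v = 1 := by
          rw [show u = (u.1, u.2) from rfl, show v = (v.1, v.2) from rfl, h2]
          exact lex_dist_col huv2
        rw [d1, d2, d3] at hmem'
        omega
      · have d2 : (lexProd G (⊤ : SimpleGraph (Fin n))).dist w v = G.dist u.1 v.1 := by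
          rw [show v = (v.1, v.2) from rfl, show w = (w.1, w.2) from rfl, h1]
          exact lex_dist_eq hG (fun e => h2 e.symm) w.2 v.2
        have d3 : (lexProd G (⊤ : SimpleGraph (Fin n))).dist u v = G.dist u.1 v.1 := by
          rw [show u = (u.1, u.2) from rfl, show v = (v.1, v.2) from rfl]
          exact lex_dist_eq hG (fun e => h2 e.symm) u.2 v.2
        rw [d1, d2, d3] at hmem'
        omega
    · by_cases h2 : w.1 = v.1
      · have hwv2 : w.2 ≠ v.2 := fun e => hvw (Prod.ext h2 e).symm
        have d2 : (lexProd G (⊤ : SimpleGraph (Fin n))).dist w v = 1 := by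
          rw [show v = (v.1, v.2) from rfl, show w = (w.1, w.2) from rfl, h2]
          exact lex_dist_col hwv2
        have h3 : u.1 ≠ v.1 := fun e => h1 (h2.trans e.symm)
        have d1 : (lexProd G (⊤ : SimpleGraph (Fin n))).dist u w = G.dist u.1 v.1 := by
          rw [show u = (u.1, u.2) from rfl, show w = (w.1, w.2) from rfl, h2]
          exact lex_dist_eq hG h3 u.2 w.2
        have d3 : (lexProd G (⊤ : SimpleGraph (Fin n))).dist u v = G.dist u.1 v.1 := by
          rw [show u = (u.1, u.2) from rfl, show v = (v.1, v.2) from rfl]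
          exact lex_dist_eq hG h3 u.2 v.2
        rw [d1, d2, d3] at hmem'
        omega
      · by_cases h3 : u.1 = v.1
        · have huv2 : u.2 ≠ v.2 := fun e => huv (Prod.ext h3 e)
          have d3 : (lexProd G (⊤ : SimpleGraph (Fin n))).dist u v = 1 := by
            rw [show u = (u.1, u.2) from rfl, show v = (v.1, v.2) from rfl, h3]
            exact lex_dist_col huv2
          have d1 : (lexProd G (⊤ : SimpleGraph (Fin n))).dist u w = G.dist u.1 w.1 := by
            rw [show u = (u.1, u.2) from rfl, show w = (w.1, w.2) from rfl]
            exact lex_dist_eq hG (fun e => h1 e.symm) u.2 w.2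
          have d2 : (lexProd G (⊤ : SimpleGraph (Fin n))).dist w v = G.dist w.1 v.1 := by
            rw [show v = (v.1, v.2) from rfl, show w = (w.1, w.2) from rfl]
            exact lex_dist_eq hG h2 w.2 v.2
          have p1 : 0 < G.dist u.1 w.1 := hG.pos_dist_of_ne (fun e => h1 e.symm)
          have p2 : 0 < G.dist w.1 v.1 := hG.pos_dist_of_ne h2
          rw [d1, d2, d3] at hmem'
          omega
        · -- all three first coordinates distinct
          refine hP u.1 ⟨u, hu, rfl⟩ v.1 ⟨v, hv, rfl⟩ w.1 ⟨w, hw, rfl⟩ h3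
            (fun e => h1 e.symm) (fun e => h2 e.symm) ?_
          show G.dist u.1 w.1 + G.dist w.1 v.1 = G.dist u.1 v.1
          rw [← lex_dist_eq hG (fun e => h1 e.symm) u.2 w.2,
            ← lex_dist_eq hG h2 w.2 v.2, ← lex_dist_eq hG h3 u.2 v.2]
          exact hmem'

end GPAux

theorem stmt_10 {V : Type*} [Fintype V] (G : SimpleGraph V) (hG : G.Connected)
    (n : ℕ) (hn : 1 ≤ n) (S : Set (V × Fin n)) :
    (IsGPSet (lexProd G (⊤ : SimpleGraph (Fin n))) S ∧
      ∀ T, IsGPSet (lexProd G (⊤ : SimpleGraph (Fin n))) T → S ⊆ T → S = T) ↔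
    ∃ SG : Set V, (IsGPSet G SG ∧ ∀ T, IsGPSet G T → SG ⊆ T → SG = T) ∧
      S = SG ×ˢ (Set.univ : Set (Fin n)) := by
  have huniv : (Set.univ : Set (Fin n)).Nonempty := ⟨⟨0, hn⟩, trivial⟩
  have hproj : ∀ (A : Set V), Prod.fst '' (A ×ˢ (Set.univ : Set (Fin n))) = A := by
    intro A
    ext a
    constructor
    · rintro ⟨⟨b, i⟩, ⟨hb, -⟩, rfl⟩; exact hb
    · intro ha; exact ⟨(a, ⟨0, hn⟩), ⟨ha, trivial⟩, rfl⟩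
  have hsub : ∀ (T : Set (V × Fin n)), T ⊆ (Prod.fst '' T) ×ˢ (Set.univ : Set (Fin n)) := by
    intro T x hx; exact ⟨⟨x, hx, rfl⟩, trivial⟩
  constructor
  · rintro ⟨hS, hmax⟩
    refine ⟨Prod.fst '' S, ⟨(GPAux.gp_iff hG S).mp hS, ?_⟩, ?_⟩
    · intro T hT hsub'
      have hTgp : IsGPSet (lexProd G (⊤ : SimpleGraph (Fin n)))
          (T ×ˢ (Set.univ : Set (Fin n))) := by
        rw [GPAux.gp_iff hG, hproj T]; exact hT
      have hSsub : S ⊆ T ×ˢ (Set.univ : Set (Fin n)) :=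
        (hsub S).trans (Set.prod_mono hsub' le_rfl)
      have := hmax _ hTgp hSsub
      calc Prod.fst '' S = Prod.fst '' (T ×ˢ (Set.univ : Set (Fin n))) := by rw [this]
        _ = T := hproj T
    · refine hmax _ ?_ (hsub S)
      rw [GPAux.gp_iff hG, hproj]
      exact (GPAux.gp_iff hG S).mp hS
  · rintro ⟨SG, ⟨hSG, hSGmax⟩, rfl⟩
    constructor
    · rw [GPAux.gp_iff hG, hproj]; exact hSG
    · intro T hT hsub'
      have hTproj : IsGPSet G (Prod.fst '' T) := (GPAux.gp_iff hG T).mp hT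
      have h1 : SG ⊆ Prod.fst '' T := by
        calc SG = Prod.fst '' (SG ×ˢ (Set.univ : Set (Fin n))) := (hproj SG).symm
          _ ⊆ Prod.fst '' T := Set.image_mono hsub'
      have h2 : SG = Prod.fst '' T := hSGmax _ hTproj h1
      refine le_antisymm hsub' ?_
      calc T ⊆ (Prod.fst '' T) ×ˢ (Set.univ : Set (Fin n)) := hsub T
        _ = SG ×ˢ (Set.univ : Set (Fin n)) := by rw [h2]
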